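/- Let μ be a Radon measure on ℝ, fix t₀ > 0 and x₀ ∈ supp μ, and let Δ = {(x,t) : 0 ≤ t ≤ t₀, |x − x₀| ≤ e^{−t} − e^{−t₀}}. Then μ_{x,t} → μ_{x₀,t₀} in the weak-* topology as (x,t) → (x₀,t₀) with (x,t) ∈ Δ. -/

import Mathlib

open MeasureTheory Filter Topology Set
open scoped ENNReal NNReal

noncomputable section

/-- `I = [-1,1]`. -/
abbrev I01 : Set ℝ := Set.Icc (-1 : ℝ) 1

/-- The window `x + γ·I_t = [x - γe^{-t}, x + γe^{-t}]`. -/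
def window (x γ t : ℝ) : Set ℝ := Set.Icc (x - γ * Real.exp (-t)) (x + γ * Real.exp (-t))

/-- The scenery `μ_{x,t}` as a measure on `I = [-1,1]`:
`A ↦ μ(x + e^{-t}A) / μ(x + I_t)`. -/
def sceneryMeasure (μ : Measure ℝ) (x t : ℝ) : Measure I01 :=
  (μ (window x 1 t))⁻¹ • Measure.comap (fun a : I01 => x + Real.exp (-t) * (a : ℝ)) μ

/-- The scenery `μ_{x,t}` as a Borel probability measure on `I = [-1,1]`
(with an irrelevant junk value if the normalisation fails, which does not
happen when `μ` is Radon and `x ∈ supp μ`, `t ≥ 0`). -/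
def scenery (μ : Measure ℝ) (x t : ℝ) : ProbabilityMeasure I01 := by
  classical
  exact if h : IsProbabilityMeasure (sceneryMeasure μ x t) then ⟨_, h⟩
  else ⟨Measure.dirac ⟨0, by norm_num⟩, inferInstance⟩

/-- `x` belongs to the topological support of `μ`. -/
def MemSupp (μ : Measure ℝ) (x : ℝ) : Prop := ∀ ε > 0, 0 < μ (Set.Ioo (x - ε) (x + ε))

/-- `f` is an orientation-preserving `C¹` diffeomorphism of `ℝ`. -/
def IsOPDiffeo (f : ℝ → ℝ) : Prop :=
  ContDiff ℝ 1 f ∧ Function.Bijective f ∧ ∀ y : ℝ, 0 < deriv f y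

/-- The families of distributions `⟨μ⟩_{x,T}` and `⟨ν⟩_{y,T}` are asymptotic:
`⟨μ⟩_{x,T} - ⟨ν⟩_{y,T} → 0` weak-*, i.e. for every continuous `g : M^□ → ℝ`,
`(1/T) ∫_0^T (g(μ_{x,t}) - g(ν_{y,t})) dt → 0` as `T → ∞`. -/
def DistAsymptotic (μ : Measure ℝ) (x : ℝ) (ν : Measure ℝ) (y : ℝ) : Prop :=
  ∀ g : C(ProbabilityMeasure I01, ℝ),
    Tendsto (fun T : ℝ => (1 / T) * ∫ t in Set.Ioc (0 : ℝ) T,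
      (g (scenery μ x t) - g (scenery ν y t))) atTop (𝓝 0)

/-- Condition (TC) at `x`:
`lim_{K→∞} limsup_{γ→1⁺} limsup_{T→∞} (1/T)·λ({t ∈ [0,T] : μ(x+γI_t)/μ(x+I_t) ≥ K}) = 0`. -/
def CondTC (μ : Measure ℝ) (x : ℝ) : Prop :=
  Tendsto (fun K : ℝ =>
      limsup (fun γ : ℝ =>
          limsup (fun T : ℝ =>
              (1 / T) * (volume {t : ℝ | t ∈ Set.Icc (0 : ℝ) T ∧
                ENNReal.ofReal K ≤ μ (window x γ t) / μ (window x 1 t)}).toReal)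
            atTop)
        (𝓝[>] (1 : ℝ)))
    atTop (𝓝 0)

/-! Writing `μ_{x,t}(φ) = μ(x + I_t)⁻¹ ∫_{x + I_t} φ(e^t (y - x)) dμ(y)`, with `φ` extended
constantly outside `I`, numerator and denominator are integrals over the windows `x + I_t` of
integrands that are bounded and jointly continuous in `(x, t, y)`. On `Δ` these windows contain
`x₀ + I_{t₀}` and converge to it, so dominated convergence applies; the containment is what makes
the indicators converge at the endpoints, which may be atoms of `μ`. The limit denominator is
positive because `x₀ ∈ supp μ`. -/

theorem tendsto_integral_indicator_Icc {ι : Type*} {l : Filter ι} [l.IsCountablyGenerated]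
    {μ : Measure ℝ} [IsLocallyFiniteMeasure μ] {a b : ι → ℝ} {a₀ b₀ C : ℝ} {F : ι → ℝ → ℝ}
    {f : ℝ → ℝ} (ha : Tendsto a l (𝓝 a₀)) (hb : Tendsto b l (𝓝 b₀))
    (hsub : ∀ᶠ i in l, Icc a₀ b₀ ⊆ Icc (a i) (b i))
    (hmeas : ∀ᶠ i in l, AEStronglyMeasurable (F i) μ) (hbound : ∀ᶠ i in l, ∀ y, ‖F i y‖ ≤ C)
    (hlim : ∀ y ∈ Icc a₀ b₀, Tendsto (fun i => F i y) l (𝓝 (f y))) :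
    Tendsto (fun i => ∫ y, (Icc (a i) (b i)).indicator (F i) y ∂μ) l
      (𝓝 (∫ y, (Icc a₀ b₀).indicator f y ∂μ)) := by
  have hK : ∀ᶠ i in l, Icc (a i) (b i) ⊆ Icc (a₀ - 1) (b₀ + 1) := by
    filter_upwards [ha.eventually_const_lt (sub_one_lt a₀), hb.eventually_lt_const (lt_add_one b₀)]
      with i hai hbi
    exact Icc_subset_Icc hai.le hbi.le
  refine tendsto_integral_filter_of_dominated_convergence
    ((Icc (a₀ - 1) (b₀ + 1)).indicator fun _ => C) ?_ ?_ ?_ (ae_of_all _ fun y => ?_)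
  · filter_upwards [hmeas] with i hi using hi.indicator measurableSet_Icc
  · filter_upwards [hK, hbound] with i hiK hiC
    refine ae_of_all _ fun y => ?_
    rw [norm_indicator_eq_indicator_norm]
    exact (indicator_le_indicator_of_subset hiK (fun _ => norm_nonneg _) y).trans
      (indicator_le_indicator (hiC y))
  · exact (integrableOn_const isCompact_Icc.measure_ne_top).integrable_indicator measurableSet_Icc
  by_cases hy : y ∈ Icc a₀ b₀
  · rw [indicator_of_mem hy]
    refine (hlim y hy).congr' ?_
    filter_upwards [hsub] with i hi
    rw [indicator_of_mem (hi hy)]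
  · rw [indicator_of_notMem hy]
    have hout : ∀ᶠ i in l, y ∉ Icc (a i) (b i) := by
      rcases not_and_or.1 hy with hy | hy
      · filter_upwards [ha.eventually_const_lt (not_le.1 hy)] with i hi hyi
        exact hi.not_ge hyi.1
      · filter_upwards [hb.eventually_lt_const (not_le.1 hy)] with i hi hyi
        exact hi.not_ge hyi.2
    refine tendsto_const_nhds.congr' ?_
    filter_upwards [hout] with i hi
    rw [indicator_of_notMem hi]

theorem tendsto_measureReal_Icc {ι : Type*} {l : Filter ι} [l.IsCountablyGenerated]
    {μ : Measure ℝ} [IsLocallyFiniteMeasure μ] {a b : ι → ℝ} {a₀ b₀ : ℝ}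
    (ha : Tendsto a l (𝓝 a₀)) (hb : Tendsto b l (𝓝 b₀))
    (hsub : ∀ᶠ i in l, Icc a₀ b₀ ⊆ Icc (a i) (b i)) :
    Tendsto (fun i => μ.real (Icc (a i) (b i))) l (𝓝 (μ.real (Icc a₀ b₀))) := by
  simpa only [integral_indicator_one measurableSet_Icc] using
    tendsto_integral_indicator_Icc (F := fun _ => 1) (f := 1) (C := 1) ha hb hsub
      (Eventually.of_forall fun _ => aestronglyMeasurable_const)
      (Eventually.of_forall fun _ _ => norm_one.le) fun _ _ => tendsto_const_nhds

theorem window_one (x t : ℝ) : window x 1 t = Icc (x - Real.exp (-t)) (x + Real.exp (-t)) := by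
  simp only [window, one_mul]

theorem measurableSet_window (x γ t : ℝ) : MeasurableSet (window x γ t) :=
  measurableSet_Icc

theorem window_subset_window {x₀ t₀ x t : ℝ} (h : |x - x₀| ≤ Real.exp (-t) - Real.exp (-t₀)) :
    window x₀ 1 t₀ ⊆ window x 1 t := by
  rw [window_one, window_one]
  obtain ⟨h₁, h₂⟩ := abs_le.1 h
  exact Icc_subset_Icc (by linarith) (by linarith)

theorem MemSupp.measure_window_pos {μ : Measure ℝ} {x γ : ℝ} (hx : MemSupp μ x) (hγ : 0 < γ)
    (t : ℝ) : 0 < μ (window x γ t) :=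
  (hx _ (mul_pos hγ (Real.exp_pos _))).trans_le (measure_mono Ioo_subset_Icc_self)

theorem measurableEmbedding_affine_I01 (x t : ℝ) :
    MeasurableEmbedding (fun a : I01 => x + Real.exp (-t) * (a : ℝ)) :=
  ((Homeomorph.mulLeft₀ _ (Real.exp_ne_zero (-t))).trans
    (Homeomorph.addLeft x)).measurableEmbedding.comp
      (MeasurableEmbedding.subtype_coe measurableSet_Icc)

theorem range_affine_I01 (x t : ℝ) :
    range (fun a : I01 => x + Real.exp (-t) * (a : ℝ)) = window x 1 t := by
  have h : (fun a : I01 => x + Real.exp (-t) * (a : ℝ))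
      = (fun y => Real.exp (-t) * y + x) ∘ Subtype.val := by
    ext; simp only [Function.comp_apply, add_comm]
  rw [h, range_comp, Subtype.range_coe, image_affine_Icc' (Real.exp_pos _), window_one]
  congr 1 <;> ring

/-- Extending `φ` constantly outside `I` makes this jointly continuous in `(x, t, y)`. -/
def rescaledObservable (φ : C(I01, ℝ)) (x t y : ℝ) : ℝ :=
  φ (projIcc (-1 : ℝ) 1 (by norm_num) (Real.exp t * (y - x)))

theorem continuous_rescaledObservable (φ : C(I01, ℝ)) :
    Continuous fun q : ℝ × ℝ × ℝ => rescaledObservable φ q.1 q.2.1 q.2.2 :=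
  φ.continuous.comp (continuous_projIcc.comp (by fun_prop))

theorem rescaledObservable_affine (φ : C(I01, ℝ)) (x t : ℝ) (a : I01) :
    rescaledObservable φ x t (x + Real.exp (-t) * a) = φ a := by
  rw [rescaledObservable, add_sub_cancel_left, ← mul_assoc, ← Real.exp_add, add_neg_cancel,
    Real.exp_zero, one_mul, projIcc_val]

theorem scenery_eq_sceneryMeasure {μ : Measure ℝ} {x t : ℝ} (h0 : μ (window x 1 t) ≠ 0)
    (hfin : μ (window x 1 t) ≠ ∞) : (scenery μ x t : Measure I01) = sceneryMeasure μ x t := by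
  have : IsProbabilityMeasure (sceneryMeasure μ x t) := by
    constructor
    rw [sceneryMeasure, Measure.smul_apply, (measurableEmbedding_affine_I01 x t).comap_apply,
      image_univ, range_affine_I01, smul_eq_mul, ENNReal.inv_mul_cancel h0 hfin]
  unfold scenery
  exact congrArg Subtype.val (dif_pos this)

theorem integral_scenery_eq {μ : Measure ℝ} {x t : ℝ} (φ : C(I01, ℝ))
    (h0 : μ (window x 1 t) ≠ 0) (hfin : μ (window x 1 t) ≠ ∞) :
    ∫ a, φ a ∂(scenery μ x t : Measure I01) =
      (μ.real (window x 1 t))⁻¹ *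
        ∫ y, (window x 1 t).indicator (rescaledObservable φ x t) y ∂μ := by
  have he := measurableEmbedding_affine_I01 x t
  rw [scenery_eq_sceneryMeasure h0 hfin, sceneryMeasure, integral_smul_measure,
    ENNReal.toReal_inv, smul_eq_mul, measureReal_def,
    integral_indicator (measurableSet_window x 1 t), ← range_affine_I01, ← he.map_comap,
    he.integral_map]
  simp only [rescaledObservable_affine]

theorem scenery_tendsto_within_Delta_general (μ : Measure ℝ) [IsLocallyFiniteMeasure μ]
    (x₀ t₀ : ℝ) (hx₀ : MemSupp μ x₀) (φ : C(I01, ℝ)) :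
    Tendsto (fun p : ℝ × ℝ => ∫ a, φ a ∂(scenery μ p.1 p.2 : Measure I01))
      (𝓝[{p : ℝ × ℝ | 0 ≤ p.2 ∧ p.2 ≤ t₀ ∧ |p.1 - x₀| ≤ Real.exp (-p.2) - Real.exp (-t₀)}]
        (x₀, t₀))
      (𝓝 (∫ a, φ a ∂(scenery μ x₀ t₀ : Measure I01))) := by
  set l := 𝓝[{p : ℝ × ℝ | 0 ≤ p.2 ∧ p.2 ≤ t₀ ∧ |p.1 - x₀| ≤ Real.exp (-p.2) - Real.exp (-t₀)}]
    (x₀, t₀)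
  have hfin (x t : ℝ) : μ (window x 1 t) ≠ ∞ := isCompact_Icc.measure_ne_top
  have hpos : 0 < μ (window x₀ 1 t₀) := hx₀.measure_window_pos one_pos t₀
  have hnest : ∀ᶠ p in l, window x₀ 1 t₀ ⊆ window p.1 1 p.2 :=
    eventually_nhdsWithin_of_forall fun p hp => window_subset_window hp.2.2
  have hcont {g : ℝ × ℝ → ℝ} (hg : Continuous g) : Tendsto g l (𝓝 (g (x₀, t₀))) :=
    hg.continuousWithinAt
  have ha := hcont (by fun_prop : Continuous fun p : ℝ × ℝ => p.1 - Real.exp (-p.2))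
  have hb := hcont (by fun_prop : Continuous fun p : ℝ × ℝ => p.1 + Real.exp (-p.2))
  simp only [window_one] at hnest
  have hnum := tendsto_integral_indicator_Icc (μ := μ) (C := ‖φ‖) ha hb hnest
    (Eventually.of_forall fun p => ((continuous_rescaledObservable φ).comp
      (by fun_prop : Continuous fun y => (p.1, p.2, y))).aestronglyMeasurable)
    (Eventually.of_forall fun _ _ => φ.norm_coe_le_norm _)
    fun y _ => hcont ((continuous_rescaledObservable φ).comp (by fun_prop))
  have hden := tendsto_measureReal_Icc (μ := μ) ha hb hnest
  simp only [← window_one] at hnum hden hnest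
  rw [integral_scenery_eq φ hpos.ne' (hfin x₀ t₀)]
  refine ((hden.inv₀ (ENNReal.toReal_ne_zero.2 ⟨hpos.ne', hfin x₀ t₀⟩)).mul hnum).congr' ?_
  filter_upwards [hnest] with p hp
  exact (integral_scenery_eq φ (hpos.trans_le (measure_mono hp)).ne' (hfin _ _)).symm

/-- Lemma (contlemma): for `t₀ > 0` and `x₀ ∈ supp μ`, with
`Δ = {(x,t) : 0 ≤ t ≤ t₀, |x - x₀| ≤ e^{-t} - e^{-t₀}}`, the scenery `μ_{x,t}`
converges weak-* to `μ_{x₀,t₀}` as `(x,t) → (x₀,t₀)` within `Δ`. -/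
theorem scenery_tendsto_within_Delta (μ : Measure ℝ) [IsLocallyFiniteMeasure μ]
    (x₀ t₀ : ℝ) (ht₀ : 0 < t₀) (hx₀ : MemSupp μ x₀) (φ : C(I01, ℝ)) :
    Tendsto (fun p : ℝ × ℝ => ∫ a, φ a ∂(scenery μ p.1 p.2 : Measure I01))
      (𝓝[{p : ℝ × ℝ | 0 ≤ p.2 ∧ p.2 ≤ t₀ ∧ |p.1 - x₀| ≤ Real.exp (-p.2) - Real.exp (-t₀)}]
        (x₀, t₀))
      (𝓝 (∫ a, φ a ∂(scenery μ x₀ t₀ : Measure I01))) :=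
  scenery_tendsto_within_Delta_general μ x₀ t₀ hx₀ φ
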